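/- arXiv:2604.14854 — 3 statements merged into one kernel-verified Lean document; each statement's English description precedes it below -/
import Mathlib

section
/- Unboundedness of the passivity region: suppose K₀ ∈ ℝ^{m×n}, P₀ ≻ 0 satisfy the passivity LMI N(Z₀, W₀) ⪯ 0 with Z₀ = P₀^{-1}, W₀ = K₀ Z₀, where N(Z,W) = [[Z A^T + A Z − W^T B_u^T − B_u W, B_d − Z C^T],[B_d^T − C Z, −D − D^T]], and B_u ≠ 0. Then for every t ≥ 0 the gain K(t) = K₀ + t B_u^T P₀ also satisfies the passivity LMI (with the same Z₀ and W(t) = W₀ + t B_u^T), and ‖K(t)‖_F → ∞ as t → ∞. Hence the set of passivating gains is unbounded. -/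
/-!
Replacing `W` by `W + t • Buᵀ` changes `N(Z, W)` only in its upper-left block, by
`-2t • Bu Buᵀ ⪯ 0`, so the passivity LMI survives for every `t ≥ 0`. With `Z = P₀⁻¹` the
corresponding gains are `K₀ + t • Buᵀ P₀`, and `Buᵀ P₀ ≠ 0` because `P₀` is invertible, so some
entry of the gain, and with it the Frobenius norm, grows linearly in `t`.
-/

open Matrix Filter

/-- Frobenius norm of a real matrix. -/
noncomputable def frobNorm {m n : ℕ} (M : Matrix (Fin m) (Fin n) ℝ) : ℝ :=
  Real.sqrt (∑ i, ∑ j, (M i j) ^ 2)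

/-- The passivity LMI matrix `N(Z, W)`. -/
def passN {n m p : ℕ}
    (A : Matrix (Fin n) (Fin n) ℝ) (Bu : Matrix (Fin n) (Fin m) ℝ)
    (Bd : Matrix (Fin n) (Fin p) ℝ) (C : Matrix (Fin p) (Fin n) ℝ)
    (D : Matrix (Fin p) (Fin p) ℝ)
    (Z : Matrix (Fin n) (Fin n) ℝ) (W : Matrix (Fin m) (Fin n) ℝ) :
    Matrix (Fin n ⊕ Fin p) (Fin n ⊕ Fin p) ℝ :=
  Matrix.fromBlocks
    (Z * Aᵀ + A * Z - Wᵀ * Buᵀ - Bu * W) (Bd - Z * Cᵀ)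
    (Bdᵀ - C * Z) (-D - Dᵀ)

theorem Matrix.posSemidef_fromBlocks_self_mul_conjTranspose {ι κ μ R : Type*}
    [Fintype ι] [Fintype κ] [Fintype μ] [CommRing R] [PartialOrder R] [StarRing R]
    [StarOrderedRing R] (B : Matrix ι μ R) :
    (fromBlocks (B * Bᴴ) 0 0 (0 : Matrix κ κ R)).PosSemidef := by
  have h := posSemidef_self_mul_conjTranspose (fromRows B (0 : Matrix κ μ R))
  rwa [conjTranspose_fromRows_eq_fromCols_conjTranspose, fromRows_mul_fromCols,
    conjTranspose_zero, Matrix.mul_zero, Matrix.zero_mul, Matrix.mul_zero] at h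

theorem passN_add_smul_transpose {n m p : ℕ}
    (A : Matrix (Fin n) (Fin n) ℝ) (Bu : Matrix (Fin n) (Fin m) ℝ)
    (Bd : Matrix (Fin n) (Fin p) ℝ) (C : Matrix (Fin p) (Fin n) ℝ)
    (D : Matrix (Fin p) (Fin p) ℝ) (Z : Matrix (Fin n) (Fin n) ℝ)
    (W : Matrix (Fin m) (Fin n) ℝ) (t : ℝ) :
    passN A Bu Bd C D Z (W + t • Buᵀ) =
      passN A Bu Bd C D Z W - (2 * t) • fromBlocks (Bu * Buᵀ) 0 0 0 := by
  rw [passN, passN, fromBlocks_smul, sub_eq_add_neg (fromBlocks _ _ _ _), fromBlocks_neg,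
    fromBlocks_add]
  congr 1 <;> simp only [transpose_add, transpose_smul, transpose_transpose, Matrix.add_mul,
    Matrix.mul_add, Matrix.smul_mul, Matrix.mul_smul, smul_zero, neg_zero, add_zero]
  module

theorem posSemidef_neg_passN_add_smul_transpose {n m p : ℕ}
    {A : Matrix (Fin n) (Fin n) ℝ} {Bu : Matrix (Fin n) (Fin m) ℝ}
    {Bd : Matrix (Fin n) (Fin p) ℝ} {C : Matrix (Fin p) (Fin n) ℝ}
    {D : Matrix (Fin p) (Fin p) ℝ} {Z : Matrix (Fin n) (Fin n) ℝ}
    {W : Matrix (Fin m) (Fin n) ℝ} (h : (-passN A Bu Bd C D Z W).PosSemidef)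
    {t : ℝ} (ht : 0 ≤ t) : (-passN A Bu Bd C D Z (W + t • Buᵀ)).PosSemidef := by
  have hB := posSemidef_fromBlocks_self_mul_conjTranspose (κ := Fin p) Bu
  rw [conjTranspose_eq_transpose_of_trivial] at hB
  rw [passN_add_smul_transpose, neg_sub', sub_neg_eq_add]
  exact h.add (hB.smul (by positivity))

theorem abs_apply_le_frobNorm {m n : ℕ} (M : Matrix (Fin m) (Fin n) ℝ) (i : Fin m) (j : Fin n) :
    |M i j| ≤ frobNorm M := by
  rw [← Real.sqrt_sq_eq_abs]
  refine Real.sqrt_le_sqrt ?_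
  calc M i j ^ 2 ≤ ∑ j', M i j' ^ 2 :=
        Finset.single_le_sum (fun _ _ => sq_nonneg _) (Finset.mem_univ j)
    _ ≤ ∑ i', ∑ j', M i' j' ^ 2 :=
        Finset.single_le_sum (f := fun i' => ∑ j', M i' j' ^ 2)
          (fun _ _ => Finset.sum_nonneg fun _ _ => sq_nonneg _) (Finset.mem_univ i)

theorem tendsto_abs_add_mul_atTop {a b : ℝ} (hb : b ≠ 0) :
    Tendsto (fun t : ℝ => |a + t * b|) atTop atTop := by
  refine tendsto_atTop_mono' atTop ?_ (tendsto_atTop_add_const_right _ (-|a|)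
    (tendsto_id.atTop_mul_const (abs_pos.mpr hb)))
  filter_upwards [eventually_ge_atTop 0] with t ht
  calc id t * |b| + -|a| = |t * b| - |a| := by rw [id, abs_mul, abs_of_nonneg ht]; ring
    _ ≤ |a + t * b| := by simpa [add_comm] using abs_sub_abs_le_abs_add (t * b) a

theorem tendsto_frobNorm_add_smul_atTop {m n : ℕ} (K : Matrix (Fin m) (Fin n) ℝ)
    {M : Matrix (Fin m) (Fin n) ℝ} (hM : M ≠ 0) :
    Tendsto (fun t : ℝ => frobNorm (K + t • M)) atTop atTop := by
  obtain ⟨i, hi⟩ := Function.ne_iff.mp hM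
  obtain ⟨j, hij⟩ := Function.ne_iff.mp hi
  refine tendsto_atTop_mono (fun t => ?_) (tendsto_abs_add_mul_atTop (a := K i j) hij)
  simpa using abs_apply_le_frobNorm (K + t • M) i j

/-- Unboundedness of the passivity region: translating `W₀` along `t • Buᵀ`
preserves the passivity LMI, the corresponding gains `K₀ + t • Buᵀ P₀` blow up
in Frobenius norm, and hence the set of passivating gains is unbounded. -/
theorem stmt_4 {n m p : ℕ}
    (A : Matrix (Fin n) (Fin n) ℝ) (Bu : Matrix (Fin n) (Fin m) ℝ)
    (Bd : Matrix (Fin n) (Fin p) ℝ) (C : Matrix (Fin p) (Fin n) ℝ)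
    (D : Matrix (Fin p) (Fin p) ℝ) (hBu : Bu ≠ 0)
    (K₀ : Matrix (Fin m) (Fin n) ℝ) (P₀ : Matrix (Fin n) (Fin n) ℝ)
    (hP₀ : P₀.PosDef)
    (h₀ : (-(passN A Bu Bd C D P₀⁻¹ (K₀ * P₀⁻¹))).PosSemidef) :
    (∀ t : ℝ, 0 ≤ t →
        (-(passN A Bu Bd C D P₀⁻¹ (K₀ * P₀⁻¹ + t • Buᵀ))).PosSemidef) ∧
    Tendsto (fun t : ℝ => frobNorm (K₀ + t • (Buᵀ * P₀))) atTop atTop ∧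
    ¬ ∃ R : ℝ, ∀ K : Matrix (Fin m) (Fin n) ℝ,
        (∃ (Z : Matrix (Fin n) (Fin n) ℝ) (W : Matrix (Fin m) (Fin n) ℝ),
          Z.PosDef ∧ (-(passN A Bu Bd C D Z W)).PosSemidef ∧ K = W * Z⁻¹) →
        frobNorm K ≤ R := by
  have hdet : IsUnit P₀.det := hP₀.det_pos.ne'.isUnit
  have hpass : ∀ t : ℝ, 0 ≤ t →
      (-(passN A Bu Bd C D P₀⁻¹ (K₀ * P₀⁻¹ + t • Buᵀ))).PosSemidef :=
    fun t ht => posSemidef_neg_passN_add_smul_transpose h₀ ht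
  have hdir : Buᵀ * P₀ ≠ 0 := by
    intro h
    have h' := congrArg (· * P₀⁻¹) h
    simp only [mul_nonsing_inv_cancel_right _ _ hdet, Matrix.zero_mul] at h'
    exact hBu (transpose_eq_zero.mp h')
  have hgain : ∀ t : ℝ, K₀ + t • (Buᵀ * P₀) = (K₀ * P₀⁻¹ + t • Buᵀ) * P₀⁻¹⁻¹ := fun t => by
    rw [nonsing_inv_nonsing_inv _ hdet, Matrix.add_mul, Matrix.smul_mul,
      nonsing_inv_mul_cancel_right _ _ hdet]
  have hnorm := tendsto_frobNorm_add_smul_atTop K₀ hdir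
  refine ⟨hpass, hnorm, ?_⟩
  rintro ⟨R, hR⟩
  obtain ⟨t, hRt, ht⟩ := ((hnorm.eventually_gt_atTop R).and (eventually_ge_atTop 0)).exists
  exact hRt.not_ge (hR _ ⟨P₀⁻¹, _, hP₀.inv, hpass t ht, hgain t⟩)
end

section
/- The set 𝒫 of passivating gains is path-connected whenever it is nonempty: 𝒫 is the image of the convex set 𝓛 = {(Z,W) : Z ≻ 0, passivity LMI in (Z,W) holds} under the continuous map (Z,W) ↦ W Z^{-1}, and the continuous image of a nonempty convex (hence path-connected) set is path-connected. -/
/-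
Positive (semi)definiteness cuts out convex cones and `passN` is affine in `(Z, W)`, so 𝓛 is
convex, hence path-connected once nonempty. 𝒫 is its image under `(Z, W) ↦ W Z⁻¹`, which is
continuous wherever `Z` is invertible.
-/

open Matrix

section Convexity

open scoped ComplexOrder

variable {𝕜 k : Type*} [RCLike 𝕜]

lemma convex_setOf_posDef : Convex ℝ {Z : Matrix k k 𝕜 | Z.PosDef} :=
  convex_iff_forall_pos.2 fun _ h₁ _ h₂ _ _ ha hb _ => (h₁.smul ha).add (h₂.smul hb)

lemma convex_setOf_posSemidef : Convex ℝ {M : Matrix k k 𝕜 | M.PosSemidef} :=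
  fun _ h₁ _ h₂ _ _ ha hb _ => (h₁.smul ha).add (h₂.smul hb)

end Convexity

section Passivity

variable {n m p : ℕ}
    (A : Matrix (Fin n) (Fin n) ℝ) (Bu : Matrix (Fin n) (Fin m) ℝ)
    (Bd : Matrix (Fin n) (Fin p) ℝ) (C : Matrix (Fin p) (Fin n) ℝ)
    (D : Matrix (Fin p) (Fin p) ℝ)

lemma passN_smul_add_smul (Z₁ Z₂ : Matrix (Fin n) (Fin n) ℝ) (W₁ W₂ : Matrix (Fin m) (Fin n) ℝ)
    {a b : ℝ} (hab : a + b = 1) :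
    passN A Bu Bd C D (a • Z₁ + b • Z₂) (a • W₁ + b • W₂) =
      a • passN A Bu Bd C D Z₁ W₁ + b • passN A Bu Bd C D Z₂ W₂ := by
  obtain rfl : b = 1 - a := by linarith
  simp only [passN, fromBlocks_smul, fromBlocks_add, transpose_add, transpose_smul,
    Matrix.add_mul, Matrix.mul_add, Matrix.smul_mul, Matrix.mul_smul]
  congr 1 <;> module

lemma convex_passivityLMI :
    Convex ℝ {ZW : Matrix (Fin n) (Fin n) ℝ × Matrix (Fin m) (Fin n) ℝ |
      ZW.1.PosDef ∧ (-(passN A Bu Bd C D ZW.1 ZW.2)).PosSemidef} := by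
  rintro ⟨Z₁, W₁⟩ ⟨hZ₁, hN₁⟩ ⟨Z₂, W₂⟩ ⟨hZ₂, hN₂⟩ a b ha hb hab
  refine ⟨convex_setOf_posDef hZ₁ hZ₂ ha hb hab, ?_⟩
  change (-passN A Bu Bd C D (a • Z₁ + b • Z₂) (a • W₁ + b • W₂)).PosSemidef
  rw [passN_smul_add_smul A Bu Bd C D Z₁ Z₂ W₁ W₂ hab, neg_add, ← smul_neg, ← smul_neg]
  exact convex_setOf_posSemidef hN₁ hN₂ ha hb hab

end Passivity

lemma continuousOn_snd_mul_inv_fst {𝕜 k l : Type*} [NontriviallyNormedField 𝕜] [CompleteSpace 𝕜]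
    [Fintype k] [DecidableEq k] [Fintype l] :
    ContinuousOn (fun ZW : Matrix k k 𝕜 × Matrix l k 𝕜 => ZW.2 * ZW.1⁻¹)
      {ZW | IsUnit ZW.1.det} := fun ZW hZ => by
  have hinv : ContinuousAt Inv.inv ZW.1 :=
    continuousAt_matrix_inv _ (NormedRing.inverse_continuousAt hZ.unit)
  have hmul : Continuous fun q : Matrix l k 𝕜 × Matrix k k 𝕜 => q.1 * q.2 :=
    continuous_fst.matrix_mul continuous_snd
  exact (hmul.continuousAt.comp
    (continuousAt_snd.prodMk (hinv.comp continuousAt_fst))).continuousWithinAt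

/-- If nonempty, the set of passivating gains (the image of the convex LMI
solution set under `(Z, W) ↦ W Z⁻¹`) is path-connected. -/
theorem stmt_5 {n m p : ℕ}
    (A : Matrix (Fin n) (Fin n) ℝ) (Bu : Matrix (Fin n) (Fin m) ℝ)
    (Bd : Matrix (Fin n) (Fin p) ℝ) (C : Matrix (Fin p) (Fin n) ℝ)
    (D : Matrix (Fin p) (Fin p) ℝ)
    (L : Set (Matrix (Fin n) (Fin n) ℝ × Matrix (Fin m) (Fin n) ℝ))
    (hL : L = {ZW | ZW.1.PosDef ∧ (-(passN A Bu Bd C D ZW.1 ZW.2)).PosSemidef})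
    (Pgains : Set (Matrix (Fin m) (Fin n) ℝ))
    (hPgains : Pgains = (fun ZW : Matrix (Fin n) (Fin n) ℝ × Matrix (Fin m) (Fin n) ℝ =>
      ZW.2 * ZW.1⁻¹) '' L)
    (hne : L.Nonempty) :
    IsPathConnected Pgains := by
  subst hL hPgains
  exact ((convex_passivityLMI A Bu Bd C D).isPathConnected hne).image'
    (continuousOn_snd_mul_inv_fst.mono fun _ hZW => hZW.1.det_pos.ne'.isUnit)
end

section
/- Nonconvexity example: for the system A = I₂, B_u = I₂, B_d = (1,0)^T, C = (1,0), D = 0, the gains K₁ = [[2,2],[0.5,2]] and K₂ = [[2,0.5],[2,2]] are both passivating (there exist P ≻ 0 with B_d^T P = C and (A−K)^T P + P(A−K) ⪯ 0, namely P = diag(1,4) and P = diag(1,1/4) respectively), but their midpoint K_c = [[2, 1.25],[1.25, 2]] admits no P ≻ 0 satisfying these conditions. Hence the set of passivating gains is not convex. -/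
open Matrix

/-!
The constraint `B_dᵀ P = C` and the symmetry of `P` force `P = diag(1, p)` with `p > 0`, and for
such `P` the dissipation inequality is semidefiniteness of an explicit symmetric `2 × 2` matrix,
i.e. a quadratic inequality in `p`. For `K₁` and `K₂` it holds at `p = 4` and `p = 1/4`; for the
midpoint it reads `(5/4)² (1 + p)² ≤ 4 p`, which no `p > 0` satisfies.
-/

/-- `K` is passivating for the example system `A = I₂`, `B_d = (1,0)ᵀ`,
`C = (1,0)`, `D = 0`. -/
def passivating (K : Matrix (Fin 2) (Fin 2) ℝ) : Prop :=
  ∃ P : Matrix (Fin 2) (Fin 2) ℝ, P.PosDef ∧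
    (!![(1 : ℝ); 0])ᵀ * P = !![(1 : ℝ), 0] ∧
    (-(((1 : Matrix (Fin 2) (Fin 2) ℝ) - K)ᵀ * P +
        P * ((1 : Matrix (Fin 2) (Fin 2) ℝ) - K))).PosSemidef

namespace Matrix

theorem posSemidef_fin_two_iff {a b c : ℝ} :
    !![a, b; b, c].PosSemidef ↔ 0 ≤ a ∧ 0 ≤ c ∧ b ^ 2 ≤ a * c := by
  refine ⟨fun h ↦ ⟨h.diag_nonneg (i := 0), h.diag_nonneg (i := 1), ?_⟩, fun ⟨ha, hc, hb⟩ ↦ ?_⟩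
  · have hdet := h.det_nonneg
    rw [det_fin_two_of] at hdet
    nlinarith
  refine PosSemidef.of_dotProduct_mulVec_nonneg ?_ fun x ↦ ?_
  · ext i j; fin_cases i <;> fin_cases j <;> rfl
  simp only [star_trivial, dotProduct, mulVec, Fin.sum_univ_two, cons_val_zero, cons_val_one,
    of_apply]
  rcases (add_nonneg ha hc).eq_or_lt with htr | htr
  · obtain ⟨rfl, rfl⟩ : a = 0 ∧ c = 0 := ⟨by linarith, by linarith⟩
    obtain rfl : b = 0 := by nlinarith
    simp
  -- `(a + c) xᵀ M x = |M x|² + (a c - b²) |x|²`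
  refine nonneg_of_mul_nonneg_right ?_ htr
  nlinarith [sq_nonneg (a * x 0 + b * x 1), sq_nonneg (b * x 0 + c * x 1),
    mul_nonneg (sub_nonneg.2 hb) (add_nonneg (sq_nonneg (x 0)) (sq_nonneg (x 1)))]

theorem transpose_col_mul_eq_row_iff {R : Type*} [Semiring R] (P : Matrix (Fin 2) (Fin 2) R)
    (a b : R) : (!![(1 : R); 0])ᵀ * P = !![a, b] ↔ P 0 0 = a ∧ P 0 1 = b := by
  rw [← Matrix.ext_iff, Fin.forall_fin_one, Fin.forall_fin_two]
  simp [mul_apply, Fin.sum_univ_two]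

theorem neg_lyapunov_diagonal_fin_two {R : Type*} [CommRing R] (a b c d p : R) :
    -((1 - !![a, b; c, d])ᵀ * diagonal ![1, p] + diagonal ![1, p] * (1 - !![a, b; c, d])) =
      !![2 * (a - 1), b + c * p; b + c * p, 2 * p * (d - 1)] := by
  rw [one_fin_two, diagonal_vec2]
  ext i j; fin_cases i <;> fin_cases j <;> simp [mul_apply, Fin.sum_univ_two] <;> ring

end Matrix

theorem passivating_iff {a b c d : ℝ} :
    passivating !![a, b; c, d] ↔
      ∃ p > 0, 1 ≤ a ∧ 1 ≤ d ∧ (b + c * p) ^ 2 ≤ 4 * p * (a - 1) * (d - 1) := by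
  constructor
  · rintro ⟨P, hP, hrow, hL⟩
    obtain ⟨h00, h01⟩ := (transpose_col_mul_eq_row_iff P 1 0).1 hrow
    have h10 : P 1 0 = 0 := by simpa [h01] using (hP.isHermitian.apply 1 0).symm
    have hP_eq : P = diagonal ![1, P 1 1] := by
      ext i j; fin_cases i <;> fin_cases j <;> simp [h00, h01, h10]
    rw [hP_eq, neg_lyapunov_diagonal_fin_two, posSemidef_fin_two_iff] at hL
    obtain ⟨ha, hd, hb⟩ := hL
    have hp : 0 < P 1 1 := hP.diag_pos
    exact ⟨P 1 1, hp, by linarith, by nlinarith, by linarith⟩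
  · rintro ⟨p, hp, ha, hd, hb⟩
    refine ⟨diagonal ![1, p], ?_, ?_, ?_⟩
    · simp [Fin.forall_fin_two, hp]
    · simp [transpose_col_mul_eq_row_iff]
    · rw [neg_lyapunov_diagonal_fin_two, posSemidef_fin_two_iff]
      exact ⟨by linarith, by nlinarith, by linarith⟩

/-- Nonconvexity example: `K₁` and `K₂` are passivating but their midpoint is
not; hence the set of passivating gains is not convex. -/
theorem stmt_6 :
    passivating !![(2 : ℝ), 2; 0.5, 2] ∧
    passivating !![(2 : ℝ), 0.5; 2, 2] ∧
    ¬ passivating !![(2 : ℝ), 1.25; 1.25, 2] ∧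
    ¬ Convex ℝ {K : Matrix (Fin 2) (Fin 2) ℝ | passivating K} := by
  have h₁ : passivating !![(2 : ℝ), 2; 0.5, 2] := passivating_iff.2 ⟨4, by norm_num⟩
  have h₂ : passivating !![(2 : ℝ), 0.5; 2, 2] := passivating_iff.2 ⟨1 / 4, by norm_num⟩
  have hmid : ¬ passivating !![(2 : ℝ), 1.25; 1.25, 2] := by
    rw [passivating_iff]
    rintro ⟨p, hp, -, -, hb⟩
    -- `(1 + p)² = (1 - p)² + 4 p`, so the left side is at least `25 p / 4 > 4 p`
    nlinarith [sq_nonneg (1 - p)]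
  have hmidpoint : (1 / 2 : ℝ) • !![(2 : ℝ), 2; 0.5, 2] + (1 / 2 : ℝ) • !![(2 : ℝ), 0.5; 2, 2] =
      !![(2 : ℝ), 1.25; 1.25, 2] := by
    ext i j; fin_cases i <;> fin_cases j <;> norm_num
  refine ⟨h₁, h₂, hmid, fun hconv ↦ hmid ?_⟩
  simpa only [hmidpoint, Set.mem_ofPred_eq] using
    hconv h₁ h₂ (by norm_num) (by norm_num) (add_halves 1)
end
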